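/- arXiv:1910.00960 — 7 statements merged into one kernel-verified Lean document; each statement's English description precedes it below -/
import Mathlib

section
/- Let M and N be smooth finite-dimensional manifolds without boundary and r ∈ ℕ ∪ {∞}. Let B : M → Bar be r-differentiable at x ∈ M and V : Bar → N be r-differentiable at B(x). Then (i) the composition V ∘ B : M → N is C^r at x; and (ii) if r ≥ 1, then for every local C^1 lift B̃ : U → ℝ^{2m} × ℝ^n of B around x, the differential of V ∘ B at x equals the composition of the differential of V ∘ Q_{m,n} at B̃(x) with the differential of B̃ at x; in particular this composition is independent of the choice of local lift. -/
open scoped Manifold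
open Classical

/-- The space of barcodes, encoded as pairs consisting of the finite multiset of
bounded off-diagonal intervals `(b,d)` with `b ≠ d`, and the finite multiset of left
endpoints of the infinite intervals (the diagonal with infinite multiplicity being
implicit). -/
abbrev Barcode : Type := Multiset (ℝ × ℝ) × Multiset ℝ

/-- The space of ordered barcodes with `m` finite bars and `n` infinite ones,
`ℝ^{2m} × ℝ^n`. -/
abbrev OrderedBarcode (m n : ℕ) : Type := (Fin m → ℝ × ℝ) × (Fin n → ℝ)

/-- The quotient map `Q_{m,n} : ℝ^{2m} × ℝ^n → Bar`. -/
noncomputable def Qmap (m n : ℕ) (x : OrderedBarcode m n) : Barcode :=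
  (((Finset.univ : Finset (Fin m)).val.map x.1).filter (fun p => p.1 ≠ p.2),
    (Finset.univ : Finset (Fin n)).val.map x.2)

/-- A barcode valued map `B : M → Bar` is `r`-differentiable at `x` if it admits a
`C^r` local lift through some quotient map `Q_{m,n}` on an open neighborhood of `x`. -/
def RDiffAt {E : Type*} [NormedAddCommGroup E] [NormedSpace ℝ E]
    {H : Type*} [TopologicalSpace H] (I : ModelWithCorners ℝ E H)
    {M : Type*} [TopologicalSpace M] [ChartedSpace H M]
    (r : ℕ∞) (B : M → Barcode) (x : M) : Prop :=
  ∃ (U : Set M) (m n : ℕ) (Bt : M → OrderedBarcode m n),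
    IsOpen U ∧ x ∈ U ∧ ContMDiffOn I 𝓘(ℝ, OrderedBarcode m n) r Bt U ∧
    ∀ y ∈ U, Qmap m n (Bt y) = B y

/-- A map `V : Bar → N` is `r`-differentiable at a barcode `D` if for all `m, n` and
every pre-image `x̄` of `D` under `Q_{m,n}`, the composition `V ∘ Q_{m,n}` is `C^r` on
an open neighborhood of `x̄`. -/
def VRDiffAt {F : Type*} [NormedAddCommGroup F] [NormedSpace ℝ F]
    {G : Type*} [TopologicalSpace G] (J : ModelWithCorners ℝ F G)
    {N : Type*} [TopologicalSpace N] [ChartedSpace G N]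
    (r : ℕ∞) (V : Barcode → N) (D : Barcode) : Prop :=
  ∀ (m n : ℕ) (xb : OrderedBarcode m n), Qmap m n xb = D →
    ∃ W : Set (OrderedBarcode m n), IsOpen W ∧ xb ∈ W ∧
      ContMDiffOn 𝓘(ℝ, OrderedBarcode m n) J r (V ∘ Qmap m n) W

open scoped Topology

/-! A `C^r` lift `B̃` of `B` on a neighbourhood of `x` turns `V ∘ B` into `(V ∘ Q_{m,n}) ∘ B̃`
near `x`, and `V ∘ Q_{m,n}` is `C^r` near `B̃ x` because `Q_{m,n} (B̃ x) = B x`. Both claims are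
then the ordinary chain rule for this composite of smooth maps. -/

theorem comp_eventuallyEq_comp_of_forall_mem {α β γ δ : Type*} [TopologicalSpace α]
    {f : α → β} {q : γ → β} {g : α → γ} {U : Set α} {x : α} (hU : IsOpen U) (hx : x ∈ U)
    (hfg : ∀ y ∈ U, q (g y) = f y) (V : β → δ) : V ∘ f =ᶠ[𝓝 x] (V ∘ q) ∘ g := by
  filter_upwards [hU.mem_nhds hx] with y hy
  simp only [Function.comp, hfg y hy]

section ChainRule

variable {E : Type*} [NormedAddCommGroup E] [NormedSpace ℝ E]
  {H : Type*} [TopologicalSpace H] {I : ModelWithCorners ℝ E H}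
  {M : Type*} [TopologicalSpace M] [ChartedSpace H M]
  {F : Type*} [NormedAddCommGroup F] [NormedSpace ℝ F]
  {G : Type*} [TopologicalSpace G] {J : ModelWithCorners ℝ F G}
  {N : Type*} [TopologicalSpace N] [ChartedSpace G N]
  {r : ℕ∞} {B : M → Barcode} {V : Barcode → N} {x : M}
  {U : Set M} {m n : ℕ} {Bt : M → OrderedBarcode m n}

theorem VRDiffAt.contMDiffAt_comp_Qmap {D : Barcode} (hV : VRDiffAt J r V D)
    {xb : OrderedBarcode m n} (hxb : Qmap m n xb = D) :
    ContMDiffAt 𝓘(ℝ, OrderedBarcode m n) J r (V ∘ Qmap m n) xb := by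
  obtain ⟨W, hWo, hxbW, hVW⟩ := hV m n xb hxb
  exact hVW.contMDiffAt (hWo.mem_nhds hxbW)

theorem contMDiffAt_comp_of_lift (hV : VRDiffAt J r V (B x)) (hU : IsOpen U) (hxU : x ∈ U)
    (hBt : ContMDiffOn I 𝓘(ℝ, OrderedBarcode m n) r Bt U)
    (hlift : ∀ y ∈ U, Qmap m n (Bt y) = B y) :
    ContMDiffAt I J r (V ∘ B) x :=
  ((hV.contMDiffAt_comp_Qmap (hlift x hxU)).comp x
    (hBt.contMDiffAt (hU.mem_nhds hxU))).congr_of_eventuallyEq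
      (comp_eventuallyEq_comp_of_forall_mem hU hxU hlift V)

theorem mfderiv_comp_eq_of_lift (hr : 1 ≤ r) (hV : VRDiffAt J r V (B x)) (hU : IsOpen U)
    (hxU : x ∈ U) (hBt : ContMDiffOn I 𝓘(ℝ, OrderedBarcode m n) 1 Bt U)
    (hlift : ∀ y ∈ U, Qmap m n (Bt y) = B y) :
    mfderiv I J (V ∘ B) x =
      (mfderiv 𝓘(ℝ, OrderedBarcode m n) J (V ∘ Qmap m n) (Bt x)).comp
        (mfderiv I 𝓘(ℝ, OrderedBarcode m n) Bt x) := by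
  have hVQ : MDifferentiableAt 𝓘(ℝ, OrderedBarcode m n) J (V ∘ Qmap m n) (Bt x) :=
    (hV.contMDiffAt_comp_Qmap (hlift x hxU)).mdifferentiableAt
      (by exact_mod_cast (zero_lt_one.trans_le hr).ne')
  have hBtx : MDifferentiableAt I 𝓘(ℝ, OrderedBarcode m n) Bt x :=
    (hBt.contMDiffAt (hU.mem_nhds hxU)).mdifferentiableAt one_ne_zero
  rw [(comp_eventuallyEq_comp_of_forall_mem hU hxU hlift V).mfderiv_eq, mfderiv_comp x hVQ hBtx]

end ChainRule

theorem chainRule_barcode_general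
    {E : Type*} [NormedAddCommGroup E] [NormedSpace ℝ E]
    {H : Type*} [TopologicalSpace H] (I : ModelWithCorners ℝ E H)
    {M : Type*} [TopologicalSpace M] [ChartedSpace H M]
    {F : Type*} [NormedAddCommGroup F] [NormedSpace ℝ F]
    {G : Type*} [TopologicalSpace G] (J : ModelWithCorners ℝ F G)
    {N : Type*} [TopologicalSpace N] [ChartedSpace G N]
    (r : ℕ∞) (B : M → Barcode) (V : Barcode → N) (x : M)
    (hB : RDiffAt I r B x) (hV : VRDiffAt J r V (B x)) :
    ContMDiffAt I J r (V ∘ B) x ∧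
    (1 ≤ r →
      ∀ (U : Set M) (m n : ℕ) (Bt : M → OrderedBarcode m n),
        IsOpen U → x ∈ U → ContMDiffOn I 𝓘(ℝ, OrderedBarcode m n) 1 Bt U →
        (∀ y ∈ U, Qmap m n (Bt y) = B y) →
        mfderiv I J (V ∘ B) x =
          (mfderiv 𝓘(ℝ, OrderedBarcode m n) J (V ∘ Qmap m n) (Bt x)).comp
            (mfderiv I 𝓘(ℝ, OrderedBarcode m n) Bt x)) := by
  obtain ⟨U, m, n, Bt, hU, hxU, hBt, hlift⟩ := hB
  exact ⟨contMDiffAt_comp_of_lift hV hU hxU hBt hlift,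
    fun hr _ _ _ _ hU' hxU' hBt' hlift' => mfderiv_comp_eq_of_lift hr hV hU' hxU' hBt' hlift'⟩

/-- **chain rule.** Let `B : M → Bar` be `r`-differentiable at `x` and
`V : Bar → N` be `r`-differentiable at `B x`.  Then (i) `V ∘ B` is `C^r` at `x` as a
map between smooth manifolds, and (ii) if `r ≥ 1`, for every local `C^1` lift `B̃` of
`B` around `x` the differential of `V ∘ B` at `x` is the composition of the differential
of `V ∘ Q_{m,n}` at `B̃ x` with the differential of `B̃` at `x` — in particular this
composition does not depend on the choice of lift. -/
theorem chainRule_barcode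
    {E : Type*} [NormedAddCommGroup E] [NormedSpace ℝ E] [FiniteDimensional ℝ E]
    {H : Type*} [TopologicalSpace H] (I : ModelWithCorners ℝ E H) [I.Boundaryless]
    {M : Type*} [TopologicalSpace M] [ChartedSpace H M] [IsManifold I (⊤ : ℕ∞) M]
    {F : Type*} [NormedAddCommGroup F] [NormedSpace ℝ F] [FiniteDimensional ℝ F]
    {G : Type*} [TopologicalSpace G] (J : ModelWithCorners ℝ F G) [J.Boundaryless]
    {N : Type*} [TopologicalSpace N] [ChartedSpace G N] [IsManifold J (⊤ : ℕ∞) N]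
    (r : ℕ∞) (B : M → Barcode) (V : Barcode → N) (x : M)
    (hB : RDiffAt I r B x) (hV : VRDiffAt J r V (B x)) :
    ContMDiffAt I J r (V ∘ B) x ∧
    (1 ≤ r →
      ∀ (U : Set M) (m n : ℕ) (Bt : M → OrderedBarcode m n),
        IsOpen U → x ∈ U → ContMDiffOn I 𝓘(ℝ, OrderedBarcode m n) 1 Bt U →
        (∀ y ∈ U, Qmap m n (Bt y) = B y) →
        mfderiv I J (V ∘ B) x =
          (mfderiv 𝓘(ℝ, OrderedBarcode m n) J (V ∘ Qmap m n) (Bt x)).comp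
            (mfderiv I 𝓘(ℝ, OrderedBarcode m n) Bt x)) :=
  chainRule_barcode_general I J r B V x hB hV
end

section
/- Let K be a finite set, M a topological space and F : M → ℝ^K a continuous map. Then the set tildeM := {θ ∈ M : there exists an open neighborhood U_θ of θ such that F(θ') is ordering equivalent to F(θ) for all θ' ∈ U_θ} is open and dense in M. -/
/-- Two functions `f g : K → ℝ` are *ordering equivalent* if they induce the same
pre-order on `K`, i.e. `f σ ≤ f σ' ↔ g σ ≤ g σ'` for all `σ, σ'`. -/
def OrderingEquivalent {K : Type*} (f g : K → ℝ) : Prop :=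
  ∀ σ σ' : K, f σ ≤ f σ' ↔ g σ ≤ g σ'

/-- If `K` is a finite set, `M` a topological space and `F : M → ℝ^K`
is continuous, then the set of parameters `θ` admitting an open neighborhood on which
all values of `F` are ordering equivalent to `F θ` is open and dense in `M`. -/
theorem tildeM_isOpen_and_dense {K M : Type*} [Finite K] [TopologicalSpace M]
    (F : M → K → ℝ) (hF : Continuous F) :
    IsOpen {θ : M | ∃ U : Set M, IsOpen U ∧ θ ∈ U ∧
        ∀ θ' ∈ U, OrderingEquivalent (F θ') (F θ)} ∧
    Dense {θ : M | ∃ U : Set M, IsOpen U ∧ θ ∈ U ∧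
        ∀ θ' ∈ U, OrderingEquivalent (F θ') (F θ)} := by
  classical
  cases nonempty_fintype K
  constructor
  · rw [isOpen_iff_forall_mem_open]
    rintro θ ⟨U, hU, hθU, h⟩
    exact ⟨U, fun θ'' hθ'' => ⟨U, hU, hθ'', fun θ' hθ' σ σ' =>
      (h θ' hθ' σ σ').trans (h θ'' hθ'' σ σ').symm⟩, hU, hθU⟩
  · rw [dense_iff_inter_open]
    intro V hV hVne
    set g : M → ℕ :=
      fun θ => (Finset.univ.filter (fun p : K × K => F θ p.1 < F θ p.2)).card with hg
    have hbdd : BddAbove (g '' V) := ⟨Fintype.card (K × K), by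
      rintro n ⟨θ, _, rfl⟩
      simpa [hg] using Finset.card_filter_le (Finset.univ : Finset (K × K))
        (fun p : K × K => F θ p.1 < F θ p.2)⟩
    have hne : (g '' V).Nonempty := hVne.image g
    obtain ⟨θ₀, hθ₀V, hg0⟩ := Nat.sSup_mem hne hbdd
    set W : Set M := V ∩ ⋂ p ∈ Finset.univ.filter (fun p : K × K => F θ₀ p.1 < F θ₀ p.2),
      {θ' | F θ' p.1 < F θ' p.2} with hW
    have hWopen : IsOpen W := hV.inter (isOpen_biInter_finset fun p _ =>
      isOpen_lt ((continuous_apply p.1).comp hF) ((continuous_apply p.2).comp hF))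
    have hθ₀W : θ₀ ∈ W := ⟨hθ₀V, by
      simp only [Set.mem_iInter]
      intro p hp
      exact (Finset.mem_filter.mp hp).2⟩
    have key : ∀ θ' ∈ W,
        (Finset.univ.filter (fun p : K × K => F θ₀ p.1 < F θ₀ p.2))
          = Finset.univ.filter (fun p : K × K => F θ' p.1 < F θ' p.2) := by
      intro θ' hθ'
      have hsub : (Finset.univ.filter (fun p : K × K => F θ₀ p.1 < F θ₀ p.2)) ⊆
          Finset.univ.filter (fun p : K × K => F θ' p.1 < F θ' p.2) := by
        intro p hp
        refine Finset.mem_filter.mpr ⟨Finset.mem_univ _, ?_⟩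
        exact Set.mem_iInter₂.mp hθ'.2 p hp
      have hle : g θ' ≤ g θ₀ := by
        rw [hg0]
        exact le_csSup hbdd ⟨θ', hθ'.1, rfl⟩
      exact Finset.eq_of_subset_of_card_le hsub hle
    refine ⟨θ₀, hθ₀V, W, hWopen, hθ₀W, fun θ' hθ' σ σ' => ?_⟩
    have h1 := key θ' hθ'
    have hiff : F θ' σ' < F θ' σ ↔ F θ₀ σ' < F θ₀ σ := by
      constructor <;> intro h
      · have hm : (σ', σ) ∈ Finset.univ.filter (fun p : K × K => F θ' p.1 < F θ' p.2) :=
          Finset.mem_filter.mpr ⟨Finset.mem_univ _, h⟩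
        rw [← h1] at hm
        exact (Finset.mem_filter.mp hm).2
      · have hm : (σ', σ) ∈ Finset.univ.filter (fun p : K × K => F θ₀ p.1 < F θ₀ p.2) :=
          Finset.mem_filter.mpr ⟨Finset.mem_univ _, h⟩
        rw [h1] at hm
        exact (Finset.mem_filter.mp hm).2
    rw [← not_lt, ← not_lt, hiff]
end

section
/- Let M₁,…,M_n be smooth finite-dimensional manifolds without boundary and ι_i : M_i → ℝ^d smooth maps (in particular, inclusions of smooth submanifolds of ℝ^d), and let ι : M₁×⋯×M_n → (ℝ^d)^n be the product map. Then there exists an open dense subset W of M₁×⋯×M_n such that the composition F ∘ ι is C^∞ on W, and such that every θ ∈ W has an open neighborhood on which all the filter functions F(ι(θ')) are ordering equivalent to F(ι(θ)). -/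
open scoped Manifold

/-- The Rips parametrization: to a point cloud `P` and a nonempty subset `σ` of
`{1,…,n}` it assigns `max_{i,j ∈ σ} ‖pᵢ - pⱼ‖` (Euclidean norm). -/
noncomputable def ripsParam (d n : ℕ) (P : Fin n → EuclideanSpace ℝ (Fin d))
    (σ : {s : Finset (Fin n) // s.Nonempty}) : ℝ :=
  σ.1.sup' σ.2 fun i => σ.1.sup' σ.2 fun j => ‖P i - P j‖

/-!
The filtration value of a simplex is the largest of its pairwise distances, so the Rips filter
function is governed by the ordering of the finitely many continuous functions
`θ ↦ ‖ι i (θ i) - ι j (θ j)‖`. Off the frontiers of the closed sets where one of these distances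
is at most another (a finite union of closed nowhere dense sets) this ordering is locally
constant. There every filtration value locally equals one fixed pairwise distance, which is
smooth: either it does not vanish, or it stays tied with a diagonal distance and so vanishes
identically.
-/

open Set Filter Topology

section PiManifold

variable {ι : Type*} [Fintype ι] {𝕜 : Type*} [NontriviallyNormedField 𝕜]
  {E : ι → Type*} [∀ i, NormedAddCommGroup (E i)] [∀ i, NormedSpace 𝕜 (E i)]
  {H : ι → Type*} [∀ i, TopologicalSpace (H i)] (I : ∀ i, ModelWithCorners 𝕜 (E i) (H i))
  {M : ι → Type*} [∀ i, TopologicalSpace (M i)] [∀ i, ChartedSpace (H i) (M i)]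

theorem extChartAt_pi (x : ∀ i, M i) :
    extChartAt (ModelWithCorners.pi I) x = PartialEquiv.pi fun i => extChartAt (I i) (x i) := by
  simp only [extChartAt, OpenPartialHomeomorph.extend, piChartedSpace_chartAt,
    ModelWithCorners.pi, ← PartialEquiv.pi_trans]
  rfl

theorem contMDiff_apply_pi (n : WithTop ℕ∞) (i : ι) :
    ContMDiff (ModelWithCorners.pi I) (I i) n fun x : ∀ j, M j => x i := by
  intro x
  rw [contMDiffAt_iff, extChartAt_pi]
  refine ⟨(continuous_apply i).continuousAt, ?_⟩
  -- The target chart `e` is the `i`-th factor of the source chart, so in coordinates the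
  -- projection reads `y ↦ e (e.symm (y i))`, which is `y ↦ y i` near the base point.
  set e := extChartAt (I i) (x i)
  have hrange : MapsTo (fun y : ∀ j, E j => y i) (range (ModelWithCorners.pi I)) (range (I i)) := by
    rintro _ ⟨z, rfl⟩
    exact mem_range_self (z i)
  have htarget : ∀ᶠ y in 𝓝[range (ModelWithCorners.pi I)] (fun j => extChartAt (I j) (x j) (x j)),
      y i ∈ e.target :=
    ((continuous_apply i).continuousWithinAt.tendsto_nhdsWithin hrange)
      (extChartAt_target_mem_nhdsWithin (x i))
  refine (contDiff_pi.mp contDiff_id i).contDiffWithinAt.congr_of_eventuallyEq ?_ ?_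
  · filter_upwards [htarget] with y hy using e.right_inv hy
  · exact congrArg e (e.left_inv (mem_extChartAt_source (x i)))

end PiManifold

section Frontier

variable {X : Type*} [TopologicalSpace X]

theorem IsClosed.dense_compl_frontier {s : Set X} (hs : IsClosed s) : Dense (frontier s)ᶜ :=
  interior_eq_empty_iff_dense_compl.mp (interior_frontier hs)

theorem eventually_mem_iff_of_notMem_frontier {s : Set X} {x : X} (hx : x ∉ frontier s) :
    ∀ᶠ y in 𝓝 x, y ∈ s ↔ x ∈ s := by
  rw [← mem_compl_iff, compl_frontier_eq_union_interior] at hx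
  rcases hx with hx | hx
  · filter_upwards [mem_interior_iff_mem_nhds.mp hx] with y hy
    exact iff_of_true hy (interior_subset hx)
  · filter_upwards [mem_interior_iff_mem_nhds.mp hx] with y hy
    exact iff_of_false hy (interior_subset hx)

end Frontier

theorem OrderingEquivalent.refl {K : Type*} (f : K → ℝ) : OrderingEquivalent f f :=
  fun _ _ => Iff.rfl

theorem exists_isOpen_dense_eventually_orderingEquivalent {X κ : Type*} [TopologicalSpace X]
    [Finite κ] {f : X → κ → ℝ} (hf : Continuous f) :
    ∃ W : Set X, IsOpen W ∧ Dense W ∧ ∀ x ∈ W, ∀ᶠ y in 𝓝 x, OrderingEquivalent (f y) (f x) := by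
  set C : κ × κ → Set X := fun p => {x | f x p.1 ≤ f x p.2}
  have hC : ∀ p, IsClosed (C p) := fun p =>
    isClosed_le ((continuous_apply p.1).comp hf) ((continuous_apply p.2).comp hf)
  refine ⟨⋂ p, (frontier (C p))ᶜ, isOpen_iInter_of_finite fun p => isClosed_frontier.isOpen_compl,
    ?_, fun x hx => ?_⟩
  · rw [← sInter_range]
    exact (finite_range _).dense_sInter (forall_mem_range.2 fun p => isClosed_frontier.isOpen_compl)
      (forall_mem_range.2 fun p => (hC p).dense_compl_frontier)
  · have h := eventually_all.2 fun p => eventually_mem_iff_of_notMem_frontier (mem_iInter.1 hx p)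
    filter_upwards [h] with y hy k k' using hy (k, k')

theorem OrderingEquivalent.sup'_eq {κ : Type*} {f g : κ → ℝ} (h : OrderingEquivalent f g)
    {s : Finset κ} (hs : s.Nonempty) {k : κ} (hk : k ∈ s) (hmax : s.sup' hs g = g k) :
    s.sup' hs f = f k :=
  le_antisymm (Finset.sup'_le hs f fun k' hk' => (h k' k).2 (hmax ▸ Finset.le_sup' g hk'))
    (Finset.le_sup' f hk)

def pairwiseDist {κ E : Type*} [SeminormedAddCommGroup E] (P : κ → E) (e : κ × κ) : ℝ :=
  ‖P e.1 - P e.2‖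

theorem ripsParam_eq_sup'_pairwiseDist {d n : ℕ} (P : Fin n → EuclideanSpace ℝ (Fin d))
    (σ : {s : Finset (Fin n) // s.Nonempty}) :
    ripsParam d n P σ = (σ.1 ×ˢ σ.1).sup' (σ.2.product σ.2) (pairwiseDist P) := by
  rw [Finset.sup'_product_left]
  rfl

theorem exists_ripsParam_eq_pairwiseDist {d n : ℕ} (P : Fin n → EuclideanSpace ℝ (Fin d))
    (σ : {s : Finset (Fin n) // s.Nonempty}) :
    ∃ e : Fin n × Fin n, ∀ P', OrderingEquivalent (pairwiseDist P') (pairwiseDist P) →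
      ripsParam d n P' σ = pairwiseDist P' e := by
  obtain ⟨e, he, hmax⟩ := Finset.exists_mem_eq_sup' (σ.2.product σ.2) (pairwiseDist P)
  refine ⟨e, fun P' h => ?_⟩
  rw [ripsParam_eq_sup'_pairwiseDist]
  exact h.sup'_eq _ he hmax

theorem OrderingEquivalent.ripsParam {d n : ℕ} {P P' : Fin n → EuclideanSpace ℝ (Fin d)}
    (h : OrderingEquivalent (pairwiseDist P') (pairwiseDist P)) :
    OrderingEquivalent (ripsParam d n P') (ripsParam d n P) := by
  intro σ σ'
  obtain ⟨e, he⟩ := exists_ripsParam_eq_pairwiseDist P σ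
  obtain ⟨e', he'⟩ := exists_ripsParam_eq_pairwiseDist P σ'
  rw [he P' h, he' P' h, he P (.refl _), he' P (.refl _)]
  exact h e e'

theorem contMDiffAt_ripsParam_of_eventually_orderingEquivalent {EM HM M : Type*}
    [NormedAddCommGroup EM] [NormedSpace ℝ EM] [TopologicalSpace HM]
    {I : ModelWithCorners ℝ EM HM} [TopologicalSpace M] [ChartedSpace HM M]
    {d n : ℕ} {m : WithTop ℕ∞} {P : M → Fin n → EuclideanSpace ℝ (Fin d)} {x : M}
    (hP : ∀ i, ContMDiffAt I 𝓘(ℝ, EuclideanSpace ℝ (Fin d)) m (fun y => P y i) x)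
    (hord : ∀ᶠ y in 𝓝 x, OrderingEquivalent (pairwiseDist (P y)) (pairwiseDist (P x))) :
    ContMDiffAt I 𝓘(ℝ, {s : Finset (Fin n) // s.Nonempty} → ℝ) m
      (fun y => ripsParam d n (P y)) x := by
  rw [contMDiffAt_pi_space]
  intro σ
  obtain ⟨e, he⟩ := exists_ripsParam_eq_pairwiseDist (P x) σ
  refine ContMDiffAt.congr_of_eventuallyEq ?_ (hord.mono fun y hy => he (P y) hy)
  by_cases h0 : P x e.1 - P x e.2 = 0
  · -- `e` stays tied with the degenerate pair `(e.1, e.1)`, whose distance is always zero.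
    have hzero : ∀ᶠ y in 𝓝 x, pairwiseDist (P y) e = 0 := by
      filter_upwards [hord] with y hy
      have hle := (hy e (e.1, e.1)).2 (by simp [pairwiseDist, h0])
      exact le_antisymm (by simpa [pairwiseDist] using hle) (norm_nonneg _)
    exact contMDiffAt_const.congr_of_eventuallyEq hzero
  · exact (contDiffAt_norm ℝ h0).comp_contMDiffAt (f := fun y => P y e.1 - P y e.2)
      ((hP e.1).sub (hP e.2))

theorem ripsParam_comp_submanifolds_generically_smooth_general
    {n d : ℕ}
    {E : Fin n → Type*} [∀ i, NormedAddCommGroup (E i)] [∀ i, NormedSpace ℝ (E i)]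
    {H : Fin n → Type*} [∀ i, TopologicalSpace (H i)]
    (Im : ∀ i, ModelWithCorners ℝ (E i) (H i))
    {M : Fin n → Type*} [∀ i, TopologicalSpace (M i)] [∀ i, ChartedSpace (H i) (M i)]
    (ι : ∀ i, M i → EuclideanSpace ℝ (Fin d))
    (hι : ∀ i, ContMDiff (Im i) 𝓘(ℝ, EuclideanSpace ℝ (Fin d)) (⊤ : ℕ∞) (ι i)) :
    ∃ W : Set (∀ i, M i), IsOpen W ∧ Dense W ∧
      ContMDiffOn (ModelWithCorners.pi Im)
          𝓘(ℝ, {s : Finset (Fin n) // s.Nonempty} → ℝ) (⊤ : ℕ∞)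
          (fun θ => ripsParam d n (fun i => ι i (θ i))) W ∧
      ∀ θ ∈ W, ∃ U : Set (∀ i, M i), IsOpen U ∧ θ ∈ U ∧
        ∀ θ' ∈ U,
          OrderingEquivalent (ripsParam d n (fun i => ι i (θ' i)))
            (ripsParam d n (fun i => ι i (θ i))) := by
  have hP : ∀ i, ContMDiff (ModelWithCorners.pi Im) 𝓘(ℝ, EuclideanSpace ℝ (Fin d)) (⊤ : ℕ∞)
      fun θ : ∀ j, M j => ι i (θ i) := fun i => (hι i).comp (contMDiff_apply_pi Im _ i)
  have hdist : Continuous fun θ : ∀ j, M j => pairwiseDist fun i => ι i (θ i) :=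
    continuous_pi fun e => ((hP e.1).continuous.sub (hP e.2).continuous).norm
  obtain ⟨W, hWo, hWd, hW⟩ := exists_isOpen_dense_eventually_orderingEquivalent hdist
  refine ⟨W, hWo, hWd, fun θ hθ => ?_, fun θ hθ => ?_⟩
  · exact (contMDiffAt_ripsParam_of_eventually_orderingEquivalent
      (fun i => (hP i).contMDiffAt) (hW θ hθ)).contMDiffWithinAt
  · obtain ⟨U, hU, hUo, hθU⟩ := eventually_nhds_iff.1 (hW θ hθ)
    exact ⟨U, hUo, hθU, fun θ' hθ' => (hU θ' hθ').ripsParam⟩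

/-- Let `M₁,…,M_n` be smooth manifolds without boundary and
`ι_i : M_i → ℝ^d` smooth maps, with `ι : M₁ × ⋯ × M_n → (ℝ^d)^n` the product map.
Then there is an open dense subset `W` of `M₁ × ⋯ × M_n` such that the Rips
parametrization composed with `ι` is `C^∞` on `W`, and every `θ ∈ W` has an open
neighborhood on which all filter functions `F(ι(θ'))` are ordering equivalent to
`F(ι(θ))`. -/
theorem ripsParam_comp_submanifolds_generically_smooth
    {n d : ℕ}
    {E : Fin n → Type*} [∀ i, NormedAddCommGroup (E i)] [∀ i, NormedSpace ℝ (E i)]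
    [∀ i, FiniteDimensional ℝ (E i)]
    {H : Fin n → Type*} [∀ i, TopologicalSpace (H i)]
    (Im : ∀ i, ModelWithCorners ℝ (E i) (H i)) [∀ i, (Im i).Boundaryless]
    {M : Fin n → Type*} [∀ i, TopologicalSpace (M i)] [∀ i, ChartedSpace (H i) (M i)]
    [∀ i, IsManifold (Im i) ((⊤ : ℕ∞) : WithTop ℕ∞) (M i)]
    (ι : ∀ i, M i → EuclideanSpace ℝ (Fin d))
    (hι : ∀ i, ContMDiff (Im i) 𝓘(ℝ, EuclideanSpace ℝ (Fin d)) (⊤ : ℕ∞) (ι i)) :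
    ∃ W : Set (∀ i, M i), IsOpen W ∧ Dense W ∧
      ContMDiffOn (ModelWithCorners.pi Im)
          𝓘(ℝ, {s : Finset (Fin n) // s.Nonempty} → ℝ) (⊤ : ℕ∞)
          (fun θ => ripsParam d n (fun i => ι i (θ i))) W ∧
      ∀ θ ∈ W, ∃ U : Set (∀ i, M i), IsOpen U ∧ θ ∈ U ∧
        ∀ θ' ∈ U,
          OrderingEquivalent (ripsParam d n (fun i => ι i (θ' i)))
            (ripsParam d n (fun i => ι i (θ i))) :=
  ripsParam_comp_submanifolds_generically_smooth_general Im ι hι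
end

section
/- Let d, n ≥ 1 and let P = (p₁,…,p_n) ∈ (ℝ^d)^n have pairwise distinct points. Then the set of tuples A = (A₁,…,A_n) ∈ S_{d,+}(ℝ)^n such that r_{i,j}(A) ≠ r_{k,l}(A) for all unordered pairs {i,j} ≠ {k,l} of distinct indices in {1,…,n} is open and dense in S_{d,+}(ℝ)^n. -/
open Matrix

/-- The Euclidean norm on `ℝ^d` (viewed as `Fin d → ℝ`). -/
noncomputable def euclNorm {d : ℕ} (x : Fin d → ℝ) : ℝ := Real.sqrt (x ⬝ᵥ x)

/-- The "ellipsoidal" distance `r_{i,j}(A)` attached to a point cloud `p` and a tuple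
of matrices `A`:  with `u = (pᵢ - pⱼ)/‖pᵢ - pⱼ‖` and `q_t(x) = ⟨A_t x, x⟩`,
`r_{i,j}(A) = ‖pᵢ - pⱼ‖ / ((1/2)(√(q_i(u)) + √(q_j(-u))))`, with the convention
`r_{i,i}(A) = 0`. -/
noncomputable def rEll {d n : ℕ} (p : Fin n → Fin d → ℝ)
    (A : Fin n → Fin d → Fin d → ℝ) (i j : Fin n) : ℝ :=
  if i = j then 0 else
    euclNorm (p i - p j) /
      ((1 / 2) *
        (Real.sqrt ((Matrix.of (A i)).mulVec ((euclNorm (p i - p j))⁻¹ • (p i - p j)) ⬝ᵥ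
            ((euclNorm (p i - p j))⁻¹ • (p i - p j))) +
         Real.sqrt ((Matrix.of (A j)).mulVec (-((euclNorm (p i - p j))⁻¹ • (p i - p j))) ⬝ᵥ
            (-((euclNorm (p i - p j))⁻¹ • (p i - p j))))))

/-!
Each condition `r_{i,j} ≠ r_{k,l}` cuts out an open set because `r_{i,j}` is continuous on
tuples of positive-definite matrices, and a finite intersection of open dense sets is dense, so
it suffices that each of these sets is dense. If `{i, j} ≠ {k, l}`, some index, say `i`, lies in
`{i, j}` but not in `{k, l}`. Replacing `A_i` by `A_i + s • 1` with `s > 0` leaves `r_{k,l}`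
unchanged and adds `s` to `q_i(u)` for the unit vector `u`, hence strictly decreases `r_{i,j}`;
so an equality `r_{i,j} = r_{k,l}` is broken by arbitrarily small perturbations.
-/

open Filter Topology NNReal Function

abbrev PosDefMat (d : ℕ) := {B : Fin d → Fin d → ℝ // (Matrix.of B).PosDef}

lemma isOpen_and_dense_iInter {X : Type*} {ι : Sort*} [TopologicalSpace X] [Finite ι]
    {f : ι → Set X} (hf : ∀ i, IsOpen (f i) ∧ Dense (f i)) : IsOpen (⋂ i, f i) ∧ Dense (⋂ i, f i) :=
  ⟨isOpen_iInter_of_finite fun i => (hf i).1,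
    Set.sInter_range f ▸ (Set.finite_range f).dense_sInter
      (Set.forall_mem_range.2 fun i => (hf i).1) (Set.forall_mem_range.2 fun i => (hf i).2)⟩

section Euclidean

variable {d : ℕ}

lemma euclNorm_neg (x : Fin d → ℝ) : euclNorm (-x) = euclNorm x := by
  rw [euclNorm, euclNorm, neg_dotProduct, dotProduct_neg, neg_neg]

lemma dotProduct_self_pos {x : Fin d → ℝ} (hx : x ≠ 0) : 0 < x ⬝ᵥ x :=
  lt_of_le_of_ne (by simpa using dotProduct_star_self_nonneg x)
    fun h => hx (dotProduct_self_eq_zero.mp h.symm)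

lemma euclNorm_pos {x : Fin d → ℝ} (hx : x ≠ 0) : 0 < euclNorm x :=
  Real.sqrt_pos.2 (dotProduct_self_pos hx)

lemma dotProduct_self_inv_euclNorm_smul {x : Fin d → ℝ} (hx : x ≠ 0) :
    ((euclNorm x)⁻¹ • x) ⬝ᵥ ((euclNorm x)⁻¹ • x) = 1 := by
  have hq := dotProduct_self_pos hx
  rw [smul_dotProduct, dotProduct_smul, smul_eq_mul, smul_eq_mul, ← mul_assoc, ← mul_inv,
    euclNorm, Real.mul_self_sqrt hq.le, inv_mul_cancel₀ hq.ne']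

lemma inv_euclNorm_smul_ne_zero {x : Fin d → ℝ} (hx : x ≠ 0) : (euclNorm x)⁻¹ • x ≠ 0 := by
  intro h
  simpa [h] using dotProduct_self_inv_euclNorm_smul hx

lemma PosDefMat.dotProduct_mulVec_pos (B : PosDefMat d) {x : Fin d → ℝ} (hx : x ≠ 0) :
    0 < Matrix.of B.1 *ᵥ x ⬝ᵥ x := by
  simpa [dotProduct_comm] using B.2.dotProduct_mulVec_pos hx

lemma continuous_mulVec_dotProduct (v w : Fin d → ℝ) :
    Continuous fun B : Fin d → Fin d → ℝ => Matrix.of B *ᵥ v ⬝ᵥ w := by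
  simp only [Matrix.mulVec, dotProduct, Matrix.of_apply]
  fun_prop

end Euclidean

section AddSMulOne

variable {d : ℕ}

def PosDefMat.addSMulOne (B : PosDefMat d) (s : ℝ≥0) : PosDefMat d :=
  ⟨Matrix.of.symm (Matrix.of B.1 + (s : ℝ) • 1), B.2.add_posSemidef (PosSemidef.one.smul s.2)⟩

lemma PosDefMat.of_addSMulOne (B : PosDefMat d) (s : ℝ≥0) :
    Matrix.of (B.addSMulOne s).1 = Matrix.of B.1 + (s : ℝ) • 1 :=
  rfl

lemma PosDefMat.addSMulOne_zero (B : PosDefMat d) : B.addSMulOne 0 = B := by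
  ext : 1
  simp [addSMulOne]

lemma PosDefMat.continuous_addSMulOne (B : PosDefMat d) : Continuous B.addSMulOne := by
  have hcont : Continuous fun s : ℝ≥0 =>
      Matrix.of B.1 + (s : ℝ) • (1 : Matrix (Fin d) (Fin d) ℝ) := by
    fun_prop
  exact hcont.subtype_mk _

lemma PosDefMat.addSMulOne_mulVec_dotProduct (B : PosDefMat d) (s : ℝ≥0) (v : Fin d → ℝ) :
    Matrix.of (B.addSMulOne s).1 *ᵥ v ⬝ᵥ v = Matrix.of B.1 *ᵥ v ⬝ᵥ v + s * (v ⬝ᵥ v) := by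
  rw [of_addSMulOne, add_mulVec, smul_mulVec, one_mulVec, add_dotProduct,
    smul_dotProduct, smul_eq_mul]

end AddSMulOne

section EllipsoidalDistance

variable {d n : ℕ} (p : Fin n → Fin d → ℝ)

lemma rEll_of_ne {i j : Fin n} (hij : i ≠ j) (A : Fin n → Fin d → Fin d → ℝ) :
    rEll p A i j = euclNorm (p i - p j) /
      (1 / 2 * (√(Matrix.of (A i) *ᵥ ((euclNorm (p i - p j))⁻¹ • (p i - p j)) ⬝ᵥ
            ((euclNorm (p i - p j))⁻¹ • (p i - p j))) +
         √(Matrix.of (A j) *ᵥ (-((euclNorm (p i - p j))⁻¹ • (p i - p j))) ⬝ᵥ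
            (-((euclNorm (p i - p j))⁻¹ • (p i - p j)))))) :=
  if_neg hij

lemma rEll_comm (A : Fin n → Fin d → Fin d → ℝ) (i j : Fin n) :
    rEll p A i j = rEll p A j i := by
  rcases eq_or_ne i j with rfl | hij
  · rfl
  rw [rEll_of_ne p hij, rEll_of_ne p hij.symm, ← neg_sub (p i) (p j), euclNorm_neg, smul_neg,
    neg_neg, add_comm]

lemma rEll_congr {A B : Fin n → Fin d → Fin d → ℝ} {i j : Fin n} (hi : A i = B i)
    (hj : A j = B j) : rEll p A i j = rEll p B i j := by
  rw [rEll, rEll, hi, hj]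

lemma continuous_rEll {i j : Fin n} (hpij : p i ≠ p j) :
    Continuous fun A : Fin n → PosDefMat d => rEll p (fun t => (A t).1) i j := by
  have hu := inv_euclNorm_smul_ne_zero (sub_ne_zero.2 hpij)
  simp only [rEll_of_ne p (ne_of_apply_ne p hpij)]
  refine continuous_const.div (continuous_const.mul (.add ?_ ?_)) fun A => ?_
  · exact ((continuous_mulVec_dotProduct _ _).comp
      (continuous_subtype_val.comp (continuous_apply i))).sqrt
  · exact ((continuous_mulVec_dotProduct _ _).comp
      (continuous_subtype_val.comp (continuous_apply j))).sqrt
  · have hsqrt := Real.sqrt_pos.2 ((A i).dotProduct_mulVec_pos hu)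
    positivity

lemma rEll_update_addSMulOne_lt {i j : Fin n} (hpij : p i ≠ p j) (A : Fin n → PosDefMat d)
    {s : ℝ≥0} (hs : 0 < s) :
    rEll p (fun t => (update A i ((A i).addSMulOne s) t).1) i j <
      rEll p (fun t => (A t).1) i j := by
  have hij := ne_of_apply_ne p hpij
  have hp := sub_ne_zero.2 hpij
  have hu := inv_euclNorm_smul_ne_zero hp
  rw [rEll_of_ne p hij, rEll_of_ne p hij, update_self, update_of_ne hij.symm,
    PosDefMat.addSMulOne_mulVec_dotProduct, dotProduct_self_inv_euclNorm_smul hp, mul_one]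
  have hq := (A i).dotProduct_mulVec_pos hu
  have hN := euclNorm_pos hp
  gcongr
  exact lt_add_of_pos_right _ hs

lemma dense_setOf_rEll_ne {i j k l : Fin n} (hpij : p i ≠ p j) (hik : i ≠ k) (hil : i ≠ l) :
    Dense {A : Fin n → PosDefMat d |
      rEll p (fun t => (A t).1) i j ≠ rEll p (fun t => (A t).1) k l} := by
  intro A
  by_cases hA : rEll p (fun t => (A t).1) i j = rEll p (fun t => (A t).1) k l
  swap
  · exact subset_closure hA
  set path := fun s : ℝ≥0 => update A i ((A i).addSMulOne s)
  have hpath : Tendsto path (𝓝[>] 0) (𝓝 A) := by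
    have := ((continuous_const (y := A)).update i (A i).continuous_addSMulOne).tendsto 0
    simpa [path, PosDefMat.addSMulOne_zero] using this.mono_left nhdsWithin_le_nhds
  refine mem_closure_of_tendsto hpath (eventually_nhdsWithin_of_forall fun s hs => ?_)
  have hkl : rEll p (fun t => (path s t).1) k l = rEll p (fun t => (A t).1) k l :=
    rEll_congr p (by simp [path, update_of_ne hik.symm]) (by simp [path, update_of_ne hil.symm])
  show rEll p (fun t => (path s t).1) i j ≠ rEll p (fun t => (path s t).1) k l
  rw [hkl, ← hA]
  exact (rEll_update_addSMulOne_lt p hpij A hs).ne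

lemma dense_setOf_rEll_ne_of_mem {i j k l m : Fin n} (hpij : p i ≠ p j)
    (hm : m ∈ ({i, j} : Finset (Fin n))) (hmkl : m ∉ ({k, l} : Finset (Fin n))) :
    Dense {A : Fin n → PosDefMat d |
      rEll p (fun t => (A t).1) i j ≠ rEll p (fun t => (A t).1) k l} := by
  simp only [Finset.mem_insert, Finset.mem_singleton, not_or] at hm hmkl
  rcases hm with rfl | rfl
  · exact dense_setOf_rEll_ne p hpij hmkl.1 hmkl.2
  · simpa only [rEll_comm p _ i m] using dense_setOf_rEll_ne p hpij.symm hmkl.1 hmkl.2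

lemma isOpen_and_dense_setOf_rEll_ne {i j k l : Fin n} (hpij : p i ≠ p j) (hpkl : p k ≠ p l)
    (hne : ({i, j} : Finset (Fin n)) ≠ {k, l}) :
    IsOpen {A : Fin n → PosDefMat d |
        rEll p (fun t => (A t).1) i j ≠ rEll p (fun t => (A t).1) k l} ∧
      Dense {A : Fin n → PosDefMat d |
        rEll p (fun t => (A t).1) i j ≠ rEll p (fun t => (A t).1) k l} := by
  refine ⟨isOpen_ne_fun (continuous_rEll p hpij) (continuous_rEll p hpkl), ?_⟩
  rcases not_and_or.1 (mt (fun h => Finset.Subset.antisymm h.1 h.2) hne) with h | h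
  · obtain ⟨m, hm, hmkl⟩ := Finset.not_subset.1 h
    exact dense_setOf_rEll_ne_of_mem p hpij hm hmkl
  · obtain ⟨m, hm, hmij⟩ := Finset.not_subset.1 h
    simpa only [ne_comm] using dense_setOf_rEll_ne_of_mem p hpkl hm hmij

end EllipsoidalDistance

theorem genPosEllipsoid_isOpen_and_dense_general (d n : ℕ)
    (p : Fin n → Fin d → ℝ) (hp : ∀ i j : Fin n, i ≠ j → p i ≠ p j) :
    IsOpen {A : Fin n → {B : Fin d → Fin d → ℝ // (Matrix.of B).PosDef} |
      ∀ i j k l : Fin n, i ≠ j → k ≠ l →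
        ({i, j} : Finset (Fin n)) ≠ ({k, l} : Finset (Fin n)) →
        rEll p (fun t => (A t).1) i j ≠ rEll p (fun t => (A t).1) k l} ∧
    Dense {A : Fin n → {B : Fin d → Fin d → ℝ // (Matrix.of B).PosDef} |
      ∀ i j k l : Fin n, i ≠ j → k ≠ l →
        ({i, j} : Finset (Fin n)) ≠ ({k, l} : Finset (Fin n)) →
        rEll p (fun t => (A t).1) i j ≠ rEll p (fun t => (A t).1) k l} := by
  simp only [Set.ofPred_forall]
  exact isOpen_and_dense_iInter fun i => isOpen_and_dense_iInter fun j =>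
    isOpen_and_dense_iInter fun k => isOpen_and_dense_iInter fun l =>
    isOpen_and_dense_iInter fun hij => isOpen_and_dense_iInter fun hkl =>
    isOpen_and_dense_iInter fun hne =>
    isOpen_and_dense_setOf_rEll_ne p (hp i j hij) (hp k l hkl) hne

/-- Let `d, n ≥ 1` and let `P = (p₁,…,p_n)` have pairwise distinct
points.  Then the set of tuples `A = (A₁,…,A_n)` of symmetric positive-definite `d×d`
matrices such that `r_{i,j}(A) ≠ r_{k,l}(A)` for all distinct unordered pairs
`{i,j} ≠ {k,l}` of distinct indices is open and dense in `S_{d,+}(ℝ)^n`. -/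
theorem genPosEllipsoid_isOpen_and_dense (d n : ℕ) (hd : 1 ≤ d) (hn : 1 ≤ n)
    (p : Fin n → Fin d → ℝ) (hp : ∀ i j : Fin n, i ≠ j → p i ≠ p j) :
    IsOpen {A : Fin n → {B : Fin d → Fin d → ℝ // (Matrix.of B).PosDef} |
      ∀ i j k l : Fin n, i ≠ j → k ≠ l →
        ({i, j} : Finset (Fin n)) ≠ ({k, l} : Finset (Fin n)) →
        rEll p (fun t => (A t).1) i j ≠ rEll p (fun t => (A t).1) k l} ∧
    Dense {A : Fin n → {B : Fin d → Fin d → ℝ // (Matrix.of B).PosDef} |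
      ∀ i j k l : Fin n, i ≠ j → k ≠ l →
        ({i, j} : Finset (Fin n)) ≠ ({k, l} : Finset (Fin n)) →
        rEll p (fun t => (A t).1) i j ≠ rEll p (fun t => (A t).1) k l} :=
  genPosEllipsoid_isOpen_and_dense_general d n p hp
end

section
/- Let r ∈ ℕ ∪ {∞}, σ > 0, and ω : ℝ → ℝ a function of class C^r with ω(0) = 0. For (b,d) ∈ ℝ², let g_{b,d}(x,y) := (1/(2πσ²)) exp(−((x−b)² + (y−(d−b))²)/(2σ²)). Let R₁,…,R_s be measurable subsets of ℝ² (for instance the n² congruent subsquares of a fixed square B ⊂ ℝ²). Then for every m ∈ ℕ, the map ℝ^{2m} → ℝ^s sending (b₁,d₁,…,b_m,d_m) to the vector whose t-th component is Σ_{i=1}^{m} ω(dᵢ − bᵢ) ∫_{R_t} g_{bᵢ,dᵢ}(x,y) dx dy (Lebesgue integral on ℝ²) is of class C^r on all of ℝ^{2m}. -/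
/-!
Each Gaussian `g_{b,d}` is the translate by `p = (b, d - b)` of one fixed Schwartz function `K`
on `ℝ²`, so every component is `ω (d - b)` times `p ↦ ∫_{R_t} K (q - p) dq`. For a Schwartz
function `ψ` and a measure of temperate growth, `p ↦ ∫ ψ (q - p) dμ` is smooth: differentiating
under the integral sign gives an integral of the same kind for the directional derivative `∂_v ψ`,
again a Schwartz function, and the decay of `ψ` supplies the domination. The Gaussian is a
Schwartz function because its derivatives are Hermite polynomials times itself, and `K` is a
tensor product of two rescaled one-dimensional Gaussians.
-/

open MeasureTheory Real LineDeriv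
open scoped SchwartzMap Nat

lemma abs_pow_mul_exp_neg_sq_div_two_le (m : ℕ) (t : ℝ) :
    |t| ^ m * exp (-(t ^ 2 / 2)) ≤ 1 + 2 ^ m * m ! := by
  have hG : exp (-(t ^ 2 / 2)) ≤ 1 := exp_le_one_iff.2 (by nlinarith [sq_nonneg t])
  have hpow : |t| ^ m ≤ 1 + (t ^ 2) ^ m := by
    rcases le_total |t| 1 with h | h
    · linarith [pow_le_one₀ (n := m) (abs_nonneg t) h, pow_nonneg (sq_nonneg t) m]
    · rw [← sq_abs, ← pow_mul]
      linarith [pow_le_pow_right₀ h (by omega : m ≤ 2 * m)]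
  have hexp : (t ^ 2) ^ m * exp (-(t ^ 2 / 2)) ≤ 2 ^ m * m ! := by
    have := pow_div_factorial_le_exp (x := t ^ 2 / 2) (by positivity) m
    rw [div_pow, div_div, div_le_iff₀ (by positivity)] at this
    rw [exp_neg, ← div_eq_mul_inv, div_le_iff₀ (exp_pos _)]
    linarith
  calc |t| ^ m * exp (-(t ^ 2 / 2)) ≤ (1 + (t ^ 2) ^ m) * exp (-(t ^ 2 / 2)) := by gcongr
    _ ≤ 1 + 2 ^ m * m ! := by linarith

lemma max_pow_le_add_pow {a b : ℝ} (ha : 0 ≤ a) (hb : 0 ≤ b) (k : ℕ) :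
    max a b ^ k ≤ a ^ k + b ^ k := by
  rcases le_total a b with h | h
  · rw [max_eq_right h]; linarith [pow_nonneg ha k]
  · rw [max_eq_left h]; linarith [pow_nonneg hb k]

open Polynomial in
lemma Polynomial.abs_aeval_le_sum (p : ℤ[X]) (t : ℝ) :
    |aeval t p| ≤ ∑ i ∈ Finset.range (p.natDegree + 1), |(p.coeff i : ℝ)| * |t| ^ i := by
  rw [aeval_eq_sum_range]
  refine (Finset.abs_sum_le_sum_abs _ _).trans (Finset.sum_le_sum fun i _ => ?_)
  rw [zsmul_eq_mul, abs_mul, abs_pow]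

theorem ContinuousLinearMap.norm_iteratedFDeriv_comp_right_le {G E F : Type*}
    [NormedAddCommGroup G] [NormedSpace ℝ G] [NormedAddCommGroup E] [NormedSpace ℝ E]
    [NormedAddCommGroup F] [NormedSpace ℝ F] (g : G →L[ℝ] E) {f : E → F} {n : WithTop ℕ∞}
    (hf : ContDiff ℝ n f) (x : G) {i : ℕ} (hi : i ≤ n) :
    ‖iteratedFDeriv ℝ i (f ∘ g) x‖ ≤ ‖iteratedFDeriv ℝ i f (g x)‖ * ‖g‖ ^ i := by
  rw [g.iteratedFDeriv_comp_right hf x hi]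
  simpa using (iteratedFDeriv ℝ i f (g x)).norm_compContinuousLinearMap_le fun _ => g

instance MeasureTheory.Measure.HasTemperateGrowth.restrict {E : Type*} [NormedAddCommGroup E]
    [MeasurableSpace E] {μ : Measure E} [μ.HasTemperateGrowth] (s : Set E) :
    (μ.restrict s).HasTemperateGrowth :=
  ⟨⟨μ.integrablePower, (Measure.integrable_pow_neg_integrablePower μ).restrict⟩⟩

namespace SchwartzMap

open scoped ContDiff

open Polynomial in
noncomputable def gaussian : 𝓢(ℝ, ℝ) where
  toFun t := exp (-(t ^ 2 / 2))
  smooth' := by fun_prop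
  decay' k n := by
    let p := hermite n
    refine ⟨∑ i ∈ Finset.range (p.natDegree + 1),
      |(p.coeff i : ℝ)| * (1 + 2 ^ (k + i) * (k + i) !), fun t => ?_⟩
    rw [norm_iteratedFDeriv_eq_norm_iteratedDeriv, iteratedDeriv_eq_iterate,
      deriv_gaussian_eq_hermite_mul_gaussian, Real.norm_eq_abs, Real.norm_eq_abs, abs_mul, abs_mul,
      abs_pow, abs_neg, abs_one, one_pow, one_mul, abs_of_pos (exp_pos _)]
    calc |t| ^ k * (|aeval t p| * exp (-(t ^ 2 / 2)))
        ≤ |t| ^ k * ((∑ i ∈ Finset.range (p.natDegree + 1), |(p.coeff i : ℝ)| * |t| ^ i) *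
            exp (-(t ^ 2 / 2))) := by gcongr; exact abs_aeval_le_sum p t
      _ = ∑ i ∈ Finset.range (p.natDegree + 1),
            |(p.coeff i : ℝ)| * (|t| ^ (k + i) * exp (-(t ^ 2 / 2))) := by
          rw [Finset.sum_mul, Finset.mul_sum]
          exact Finset.sum_congr rfl fun i _ => by ring
      _ ≤ _ := by
          gcongr with i
          exact abs_pow_mul_exp_neg_sq_div_two_le (k + i) t

@[simp] lemma gaussian_apply (t : ℝ) : gaussian t = exp (-(t ^ 2 / 2)) := rfl

section Tensor

variable {D E A : Type*} [NormedAddCommGroup D] [NormedSpace ℝ D] [NormedAddCommGroup E]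
  [NormedSpace ℝ E] [NormedRing A] [NormedAlgebra ℝ A]

lemma norm_iteratedFDeriv_comp_fst_le (f : 𝓢(D, A)) (n : ℕ) (x : D × E) :
    ‖iteratedFDeriv ℝ n (fun x : D × E => f x.1) x‖ ≤ ‖iteratedFDeriv ℝ n f x.1‖ := by
  refine ((ContinuousLinearMap.fst ℝ D E).norm_iteratedFDeriv_comp_right_le (f.smooth ⊤) x
    (mod_cast le_top)).trans ?_
  exact mul_le_of_le_one_right (norm_nonneg _)
    (pow_le_one₀ (norm_nonneg _) (ContinuousLinearMap.norm_fst_le ℝ D E))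

lemma norm_iteratedFDeriv_comp_snd_le (g : 𝓢(E, A)) (n : ℕ) (x : D × E) :
    ‖iteratedFDeriv ℝ n (fun x : D × E => g x.2) x‖ ≤ ‖iteratedFDeriv ℝ n g x.2‖ := by
  refine ((ContinuousLinearMap.snd ℝ D E).norm_iteratedFDeriv_comp_right_le (g.smooth ⊤) x
    (mod_cast le_top)).trans ?_
  exact mul_le_of_le_one_right (norm_nonneg _)
    (pow_le_one₀ (norm_nonneg _) (ContinuousLinearMap.norm_snd_le ℝ D E))

noncomputable def tensor (f : 𝓢(D, A)) (g : 𝓢(E, A)) : 𝓢(D × E, A) where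
  toFun x := f x.1 * g x.2
  smooth' := ((f.smooth ⊤).comp contDiff_fst).mul ((g.smooth ⊤).comp contDiff_snd)
  decay' k n := by
    refine ⟨∑ i ∈ Finset.range (n + 1), (n.choose i : ℝ) *
      (SchwartzMap.seminorm ℝ k i f * SchwartzMap.seminorm ℝ 0 (n - i) g +
        SchwartzMap.seminorm ℝ 0 i f * SchwartzMap.seminorm ℝ k (n - i) g), fun x => ?_⟩
    have hLeibniz := norm_iteratedFDeriv_mul_le (n := n) ((f.smooth ⊤).comp contDiff_fst)
      ((g.smooth ⊤).comp contDiff_snd) x (mod_cast le_top)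
    have hnorm : ‖x‖ ^ k ≤ ‖x.1‖ ^ k + ‖x.2‖ ^ k :=
      max_pow_le_add_pow (norm_nonneg _) (norm_nonneg _) k
    calc ‖x‖ ^ k * ‖iteratedFDeriv ℝ n (fun x : D × E => f x.1 * g x.2) x‖
        ≤ (‖x.1‖ ^ k + ‖x.2‖ ^ k) * ∑ i ∈ Finset.range (n + 1), (n.choose i : ℝ) *
            (‖iteratedFDeriv ℝ i f x.1‖ * ‖iteratedFDeriv ℝ (n - i) g x.2‖) := by
          gcongr
          refine hLeibniz.trans (Finset.sum_le_sum fun i _ => ?_)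
          rw [mul_assoc]
          gcongr
          · exact norm_iteratedFDeriv_comp_fst_le f i x
          · exact norm_iteratedFDeriv_comp_snd_le g (n - i) x
      _ = ∑ i ∈ Finset.range (n + 1), (n.choose i : ℝ) *
            (‖x.1‖ ^ k * ‖iteratedFDeriv ℝ i f x.1‖ * ‖iteratedFDeriv ℝ (n - i) g x.2‖ +
              ‖iteratedFDeriv ℝ i f x.1‖ * (‖x.2‖ ^ k * ‖iteratedFDeriv ℝ (n - i) g x.2‖)) := by
          rw [Finset.mul_sum]
          exact Finset.sum_congr rfl fun i _ => by ring
      _ ≤ _ := by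
          gcongr with i
          · exact le_seminorm ℝ k i f x.1
          · exact norm_iteratedFDeriv_le_seminorm ℝ g (n - i) x.2
          · exact norm_iteratedFDeriv_le_seminorm ℝ f i x.1
          · exact le_seminorm ℝ k (n - i) g x.2

@[simp] lemma tensor_apply (f : 𝓢(D, A)) (g : 𝓢(E, A)) (x : D × E) :
    f.tensor g x = f x.1 * g x.2 := rfl

end Tensor

section IntegralCompSub

variable {E F : Type*} [NormedAddCommGroup E] [NormedSpace ℝ E] [MeasurableSpace E]
  [NormedAddCommGroup F] [NormedSpace ℝ F] {μ : Measure E} [μ.HasTemperateGrowth]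

variable (μ) in
lemma exists_integrable_bound_comp_sub (ψ : 𝓢(E, F)) (p : E) :
    ∃ bound : E → ℝ, Integrable bound μ ∧
      ∀ q, ∀ x ∈ Metric.ball p 1, ‖ψ (q - x)‖ ≤ bound q := by
  set N := μ.integrablePower
  set S := (Finset.Iic (N, 0)).sup (fun m => SchwartzMap.seminorm ℝ m.1 m.2) ψ
  refine ⟨fun q => 2 ^ N * S * (2 + ‖p‖) ^ N * (1 + ‖q‖) ^ (-(N : ℝ)),
    (Measure.integrable_pow_neg_integrablePower μ).const_mul _, fun q x hx => ?_⟩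
  have hdecay : (1 + ‖q - x‖) ^ N * ‖ψ (q - x)‖ ≤ 2 ^ N * S := by
    simpa using one_add_le_sup_seminorm_apply (m := (N, 0)) (k := N) (n := 0) le_rfl le_rfl ψ
      (q - x)
  have hx' : ‖x‖ ≤ ‖p‖ + 1 := by
    have := norm_le_norm_add_norm_sub' x p
    rw [Metric.mem_ball, dist_eq_norm] at hx
    linarith
  -- Peetre's inequality turns decay at `q - x` into decay at `q`, uniformly for `x` near `p`.
  have hpeetre : 1 + ‖q‖ ≤ (1 + ‖q - x‖) * (2 + ‖p‖) := by
    have := norm_sub_norm_le q x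
    nlinarith [mul_nonneg (norm_nonneg (q - x)) (norm_nonneg p), norm_nonneg (q - x)]
  dsimp only
  rw [rpow_neg (by positivity), rpow_natCast, ← div_eq_mul_inv, le_div_iff₀ (by positivity)]
  calc ‖ψ (q - x)‖ * (1 + ‖q‖) ^ N ≤ ‖ψ (q - x)‖ * ((1 + ‖q - x‖) * (2 + ‖p‖)) ^ N := by
        gcongr
    _ = (1 + ‖q - x‖) ^ N * ‖ψ (q - x)‖ * (2 + ‖p‖) ^ N := by rw [mul_pow]; ring
    _ ≤ 2 ^ N * S * (2 + ‖p‖) ^ N := by gcongr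

variable [FiniteDimensional ℝ E] [BorelSpace E]

variable (μ) in
lemma integrable_comp_sub (ψ : 𝓢(E, F)) (p : E) : Integrable (fun q => ψ (q - p)) μ := by
  obtain ⟨bound, hbound, hle⟩ := exists_integrable_bound_comp_sub μ ψ p
  exact hbound.mono' (ψ.continuous.comp (continuous_sub_right p)).aestronglyMeasurable
    (.of_forall fun q => hle q p (Metric.mem_ball_self one_pos))

variable (μ) in
theorem hasFDerivAt_integral_comp_sub (ψ : 𝓢(E, F)) (p : E) :
    HasFDerivAt (fun p => ∫ q, ψ (q - p) ∂μ) (∫ q, -fderiv ℝ ψ (q - p) ∂μ) p := by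
  obtain ⟨bound, hbound, hle⟩ := exists_integrable_bound_comp_sub μ (fderivCLM ℝ E F ψ) p
  refine hasFDerivAt_integral_of_dominated_of_fderiv_le
    (F' := fun x q => -fderiv ℝ ψ (q - x)) (Metric.ball_mem_nhds p one_pos)
    (.of_forall fun x => (integrable_comp_sub μ ψ x).aestronglyMeasurable)
    (integrable_comp_sub μ ψ p)
    (integrable_comp_sub μ (fderivCLM ℝ E F ψ) p).neg.aestronglyMeasurable
    (.of_forall fun q x hx => by simpa using hle q x hx) hbound (.of_forall fun q x _ => ?_)
  simpa [Function.comp_def] using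
    (ψ.hasFDerivAt (q - x)).comp x ((hasFDerivAt_id x).const_sub q)

theorem contDiff_integral_comp_sub (ψ : 𝓢(E, F)) :
    ContDiff ℝ ∞ (fun p => ∫ q, ψ (q - p) ∂μ) := by
  refine contDiff_infty.2 fun n => ?_
  induction n generalizing ψ with
  | zero =>
    exact contDiff_zero.2 <| continuous_iff_continuousAt.2 fun p =>
      (hasFDerivAt_integral_comp_sub μ ψ p).continuousAt
  | succ n ih =>
    refine contDiff_succ_iff_fderiv_apply.2 ⟨fun p =>
      (hasFDerivAt_integral_comp_sub μ ψ p).differentiableAt,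
      fun h => absurd h (mod_cast WithTop.natCast_ne_top n), fun v => ?_⟩
    have hfderiv (p : E) :
        fderiv ℝ (fun p => ∫ q, ψ (q - p) ∂μ) p v = -∫ q, ∂_{v} ψ (q - p) ∂μ := by
      have hint : Integrable (fun q => -fderiv ℝ ψ (q - p)) μ :=
        (integrable_comp_sub μ (fderivCLM ℝ E F ψ) p).neg
      rw [(hasFDerivAt_integral_comp_sub μ ψ p).fderiv, ContinuousLinearMap.integral_apply hint,
        ← integral_neg]
      rfl
    simp_rw [hfderiv]
    exact (ih (∂_{v} ψ)).neg

end IntegralCompSub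

noncomputable def gaussianKernel {σ : ℝ} (hσ : σ ≠ 0) : 𝓢(ℝ × ℝ, ℝ) :=
  let g := compCLMOfContinuousLinearEquiv ℝ (ContinuousLinearEquiv.unitsEquivAut ℝ
    (Units.mk0 σ⁻¹ (inv_ne_zero hσ))) gaussian
  (1 / (2 * π * σ ^ 2)) • g.tensor g

lemma gaussianKernel_apply {σ : ℝ} (hσ : σ ≠ 0) (q : ℝ × ℝ) :
    gaussianKernel hσ q = 1 / (2 * π * σ ^ 2) * exp (-(q.1 ^ 2 + q.2 ^ 2) / (2 * σ ^ 2)) := by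
  simp only [gaussianKernel, smul_apply, tensor_apply, compCLMOfContinuousLinearEquiv_apply,
    Function.comp_apply, ContinuousLinearEquiv.unitsEquivAut_apply, Units.val_mk0, gaussian_apply,
    smul_eq_mul, ← exp_add]
  congr 2
  field_simp
  ring

end SchwartzMap

theorem persistenceImage_comp_quotient_contDiff_general
    (r : ℕ∞) (σ : ℝ) (hσ : 0 < σ) (ω : ℝ → ℝ) (hω : ContDiff ℝ r ω)
    (s : ℕ) (R : Fin s → Set (ℝ × ℝ)) (m : ℕ) :
    ContDiff ℝ r (fun x : Fin m → ℝ × ℝ => fun t : Fin s =>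
      ∑ i : Fin m, ω ((x i).2 - (x i).1) *
        ∫ q in R t, (1 / (2 * Real.pi * σ ^ 2)) *
          Real.exp (-((q.1 - (x i).1) ^ 2 + (q.2 - ((x i).2 - (x i).1)) ^ 2) /
            (2 * σ ^ 2))) := by
  set K := SchwartzMap.gaussianKernel hσ.ne'
  have hK (t : Fin s) : ContDiff ℝ r fun p => ∫ q in R t, K (q - p) :=
    (SchwartzMap.contDiff_integral_comp_sub K).of_le (mod_cast le_top)
  have hcoords (i : Fin m) :
      ContDiff ℝ r fun x : Fin m → ℝ × ℝ => ((x i).1, (x i).2 - (x i).1) :=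
    (contDiff_apply ℝ (ℝ × ℝ) i).fst.prodMk
      ((contDiff_apply ℝ (ℝ × ℝ) i).snd.sub (contDiff_apply ℝ (ℝ × ℝ) i).fst)
  have hterm (t : Fin s) (i : Fin m) : ContDiff ℝ r fun x : Fin m → ℝ × ℝ =>
      ω ((x i).2 - (x i).1) * ∫ q in R t, K (q - ((x i).1, (x i).2 - (x i).1)) :=
    (hω.comp (hcoords i).snd).mul ((hK t).comp (hcoords i))
  convert contDiff_pi.2 fun t => ContDiff.sum fun i (_ : i ∈ Finset.univ) => hterm t i using 4
  simp [K, SchwartzMap.gaussianKernel_apply]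

/-- Let `σ > 0`, `ω : ℝ → ℝ` of class `C^r` with `ω 0 = 0`, and
`R₁,…,R_s` measurable subsets of `ℝ²`. Then for every `m`, the map
`ℝ^{2m} → ℝ^s` sending `(b₁,d₁,…,b_m,d_m)` to the vector whose `t`-th component is
`∑ i, ω (dᵢ - bᵢ) ∫_{R_t} g_{bᵢ,dᵢ}(x,y) dx dy`, where
`g_{b,d}(x,y) = (1/(2πσ²)) exp(-((x-b)² + (y-(d-b))²)/(2σ²))`,
is of class `C^r` on all of `ℝ^{2m}`.  (These maps are the compositions of the
persistence image with the quotient maps `Q_{m,0}`.) -/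
theorem persistenceImage_comp_quotient_contDiff
    (r : ℕ∞) (σ : ℝ) (hσ : 0 < σ) (ω : ℝ → ℝ) (hω : ContDiff ℝ r ω) (hω0 : ω 0 = 0)
    (s : ℕ) (R : Fin s → Set (ℝ × ℝ)) (hR : ∀ t, MeasurableSet (R t)) (m : ℕ) :
    ContDiff ℝ r (fun x : Fin m → ℝ × ℝ => fun t : Fin s =>
      ∑ i : Fin m, ω ((x i).2 - (x i).1) *
        ∫ q in R t, (1 / (2 * Real.pi * σ ^ 2)) *
          Real.exp (-((q.1 - (x i).1) ^ 2 + (q.2 - ((x i).2 - (x i).1)) ^ 2) /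
            (2 * σ ^ 2))) :=
  persistenceImage_comp_quotient_contDiff_general r σ hσ ω hω s R m
end

section
/- Let k ∈ ℕ, r ∈ ℕ ∪ {∞}, and let φ : ℝ² → ℝ^k, ψ : ℝ → ℝ^k and ω : ℝ → ℝ be of class C^r on their whole domains, with ω(0) = 0. Then for all m, n ∈ ℕ, the map ℝ^{2m} × ℝ^n → ℝ^k sending (b₁,d₁,…,b_m,d_m,v₁,…,v_n) to Σ_{i=1}^{m} ω(dᵢ − bᵢ) φ(bᵢ,dᵢ) + Σ_{j=1}^{n} ψ(vⱼ) is of class C^r on all of ℝ^{2m} × ℝ^n. -/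
open Finset

/-- If `φ : ℝ² → ℝ^k`, `ψ : ℝ → ℝ^k` and `ω : ℝ → ℝ` are of class `C^r`
everywhere, with `ω 0 = 0`, then for all `m, n` the composition of the associated linear
representation of barcodes with the quotient map `Q_{m,n} : ℝ^{2m} × ℝ^n → Bar`, i.e. the
map sending `(b₁,d₁,…,b_m,d_m,v₁,…,v_n)` to `∑ i, ω (dᵢ - bᵢ) • φ (bᵢ, dᵢ) + ∑ j, ψ (vⱼ)`,
is of class `C^r` on all of `ℝ^{2m} × ℝ^n`. -/
theorem linearRepresentation_comp_quotient_contDiff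
    (k : ℕ) (r : ℕ∞) (φ : ℝ × ℝ → Fin k → ℝ) (ψ : ℝ → Fin k → ℝ) (ω : ℝ → ℝ)
    (hφ : ContDiff ℝ r φ) (hψ : ContDiff ℝ r ψ) (hω : ContDiff ℝ r ω) (hω0 : ω 0 = 0)
    (m n : ℕ) :
    ContDiff ℝ r (fun x : (Fin m → ℝ × ℝ) × (Fin n → ℝ) =>
      (∑ i : Fin m, ω ((x.1 i).2 - (x.1 i).1) • φ (x.1 i)) + ∑ j : Fin n, ψ (x.2 j)) := by
  apply ContDiff.add
  · apply ContDiff.sum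
    intro i _
    have hxi : ContDiff ℝ r (fun x : (Fin m → ℝ × ℝ) × (Fin n → ℝ) => x.1 i) :=
      (contDiff_apply ℝ (ℝ × ℝ) i).comp contDiff_fst
    exact ((hω.comp ((contDiff_snd.comp hxi).sub (contDiff_fst.comp hxi)))).smul
      (hφ.comp hxi)
  · apply ContDiff.sum
    intro j _
    exact hψ.comp ((contDiff_apply ℝ ℝ j).comp contDiff_snd)
end

section
/- Let N ≥ 1 and let f, g : {1,…,N} → ℝ be strictly increasing, i.e. f₁ < f₂ < ⋯ < f_N and g₁ < g₂ < ⋯ < g_N. Then for every permutation π of {1,…,N}: max_{1≤i≤N} |f_i − g_i| ≤ max_{1≤i≤N} |f_i − g_{π(i)}|. In other words, the identity permutation minimizes π ↦ max_{1≤i≤N} |f_i − g_{π(i)}| over all permutations of {1,…,N}. -/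
private lemma pigeon_perm {N : ℕ} (π : Equiv.Perm (Fin N)) (i : Fin N) :
    ∃ j : Fin N, i ≤ j ∧ π j ≤ i := by
  by_contra h
  push_neg at h
  have hdisj : Disjoint (Finset.Ici i) ((Finset.Iic i).image π.symm) := by
    rw [Finset.disjoint_left]
    intro j hj hj'
    simp only [Finset.mem_image, Finset.mem_Iic] at hj'
    obtain ⟨k, hk, rfl⟩ := hj'
    have := h _ (Finset.mem_Ici.1 hj)
    simp at this
    exact absurd hk (not_le.2 this)
  have hcard := Finset.card_union_of_disjoint hdisj
  have h1 : (Finset.Ici i).card = N - i := Fin.card_Ici i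
  have h2 : ((Finset.Iic i).image π.symm).card = i + 1 := by
    rw [Finset.card_image_of_injective _ π.symm.injective, Fin.card_Iic]
  have hle : (Finset.Ici i ∪ (Finset.Iic i).image π.symm).card ≤ N := by
    have := Finset.card_le_univ (Finset.Ici i ∪ (Finset.Iic i).image π.symm)
    simpa using this
  have hi : (i : ℕ) < N := i.isLt
  omega

private lemma pigeon_perm' {N : ℕ} (π : Equiv.Perm (Fin N)) (i : Fin N) :
    ∃ j : Fin N, j ≤ i ∧ i ≤ π j := by
  obtain ⟨j, hj1, hj2⟩ := pigeon_perm π.symm i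
  exact ⟨π.symm j, by simpa using hj2, by simpa using hj1⟩

/-- If `f, g : {1,…,N} → ℝ` are strictly increasing, then for every
permutation `π` of `{1,…,N}`, `max_i |f i - g i| ≤ max_i |f i - g (π i)|`; i.e. the
identity permutation minimizes `π ↦ max_i |f i - g (π i)|`. -/
theorem identity_minimizes_sup_matching_cost
    (N : ℕ) (hN : 1 ≤ N) (f g : Fin N → ℝ) (hf : StrictMono f) (hg : StrictMono g)
    (π : Equiv.Perm (Fin N)) :
    (Finset.univ.sup' ⟨⟨0, hN⟩, Finset.mem_univ _⟩ fun i => |f i - g i|) ≤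
      Finset.univ.sup' ⟨⟨0, hN⟩, Finset.mem_univ _⟩ fun i => |f i - g (π i)| := by
  apply Finset.sup'_le
  intro i _
  rcases le_total (g i) (f i) with h | h
  · obtain ⟨j, hj1, hj2⟩ := pigeon_perm π i
    have h1 := hf.monotone hj1
    have h2 := hg.monotone hj2
    calc |f i - g i| = f i - g i := abs_of_nonneg (by linarith)
      _ ≤ f j - g (π j) := by linarith
      _ ≤ |f j - g (π j)| := le_abs_self _
      _ ≤ _ := Finset.le_sup' (fun k => |f k - g (π k)|) (Finset.mem_univ j)
  · obtain ⟨j, hj1, hj2⟩ := pigeon_perm' π i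
    have h1 := hf.monotone hj1
    have h2 := hg.monotone hj2
    calc |f i - g i| = g i - f i := abs_of_nonpos (by linarith) |>.trans (by ring)
      _ ≤ g (π j) - f j := by linarith
      _ ≤ |f j - g (π j)| := by rw [abs_sub_comm]; exact le_abs_self _
      _ ≤ _ := Finset.le_sup' (fun k => |f k - g (π k)|) (Finset.mem_univ j)
end
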